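/- For every graph G on n vertices and every k with 1 ≤ k ≤ n, the sum of the k largest eigenvalues of G satisfies μ₁(G) + ... + μ_k(G) ≤ ‖G‖_{F_k} ≤ (1 + √k) n / 2. -/

import Mathlib

open Finset

/-- Singular values (unsorted) of a complex matrix: square roots of eigenvalues of `A * Aᴴ`. -/
noncomputable def svalC {m n : ℕ} (A : Matrix (Fin m) (Fin n) ℂ) : Fin m → ℝ :=
  fun i => Real.sqrt ((Matrix.isHermitian_mul_conjTranspose_self A).eigenvalues i)

/-- Singular values of a complex matrix sorted in decreasing order. -/
noncomputable def svalCSorted {m n : ℕ} (A : Matrix (Fin m) (Fin n) ℂ) : Fin m → ℝ :=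
  svalC A ∘ ⇑(Tuple.sort (fun i => -(svalC A i)))

/-- Singular values (unsorted) of a real matrix. -/
noncomputable def svalR {m n : ℕ} (A : Matrix (Fin m) (Fin n) ℝ) : Fin m → ℝ :=
  fun i => Real.sqrt ((Matrix.isHermitian_mul_conjTranspose_self A).eigenvalues i)

/-- Singular values of a real matrix sorted in decreasing order. -/
noncomputable def svalRSorted {m n : ℕ} (A : Matrix (Fin m) (Fin n) ℝ) : Fin m → ℝ :=
  svalR A ∘ ⇑(Tuple.sort (fun i => -(svalR A i)))

/-- Ky Fan `k`-norm of a complex matrix: the sum of its `k` largest singular values. -/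
noncomputable def kyFanC {m n : ℕ} (A : Matrix (Fin m) (Fin n) ℂ) (k : ℕ) : ℝ :=
  ∑ i : Fin m, if (i : ℕ) < k then svalCSorted A i else 0

/-- Ky Fan `k`-norm of a real matrix. -/
noncomputable def kyFanR {m n : ℕ} (A : Matrix (Fin m) (Fin n) ℝ) (k : ℕ) : ℝ :=
  ∑ i : Fin m, if (i : ℕ) < k then svalRSorted A i else 0

/-- The adjacency matrix of a simple graph is Hermitian (over `ℝ`). -/
lemma adjHerm {n : ℕ} (G : SimpleGraph (Fin n)) [DecidableRel G.Adj] :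
    (G.adjMatrix ℝ).IsHermitian := by
  have h := G.isSymm_adjMatrix (α := ℝ)
  first
  | exact (Matrix.conjTranspose_eq_transpose_of_trivial _).trans h
  | simpa [Matrix.IsHermitian, Matrix.conjTranspose, Matrix.IsSymm, Matrix.transpose,
      starRingEnd_apply, star_trivial] using h

/-- Singular values of a graph (unsorted). -/
noncomputable def gsval {n : ℕ} (G : SimpleGraph (Fin n)) [DecidableRel G.Adj] : Fin n → ℝ :=
  svalR (G.adjMatrix ℝ)

/-- Singular values of a graph sorted in decreasing order. -/
noncomputable def gsvalSorted {n : ℕ} (G : SimpleGraph (Fin n)) [DecidableRel G.Adj] : Fin n → ℝ :=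
  svalRSorted (G.adjMatrix ℝ)

/-- Eigenvalues of a graph sorted in decreasing order: `geigSorted G 0 = μ₁ ≥ ⋯ ≥ μₙ`. -/
noncomputable def geigSorted {n : ℕ} (G : SimpleGraph (Fin n)) [DecidableRel G.Adj] : Fin n → ℝ :=
  (adjHerm G).eigenvalues ∘ ⇑(Tuple.sort (fun i => -((adjHerm G).eigenvalues i)))

/-- Ky Fan `k`-norm of a graph. -/
noncomputable def kyFanG {n : ℕ} (G : SimpleGraph (Fin n)) [DecidableRel G.Adj] (k : ℕ) : ℝ :=
  kyFanR (G.adjMatrix ℝ) k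

/-! For a symmetric matrix `A` the singular values are the absolute values of the eigenvalues
(both sides square to the eigenvalues of `A²`), and sorting in decreasing order is monotone, so the
`i`-th largest eigenvalue is at most the `i`-th largest singular value.

For an `m × n` matrix with 0-1 entries and singular values `σ₁ ≥ σ₂ ≥ ⋯`, the sum `∑ σᵢ²` is the
trace of `A Aᵀ`, i.e. the number of ones `1ᵀ A 1`, which is at most `σ₁ √(mn)` by the Rayleigh bound
for `A Aᵀ` and Cauchy–Schwarz. Cauchy–Schwarz on `σ₂, …, σ_k` bounds the Ky Fan norm by
`σ₁ + √((k - 1)(σ₁ √(mn) - σ₁²))`, whose maximum over `σ₁` is `(1 + √k) √(mn) / 2`. -/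

open Finset Matrix

section SortDesc

variable {n : ℕ}

noncomputable def sortDesc (v : Fin n → ℝ) : Fin n → ℝ :=
  v ∘ Tuple.sort (fun i => -v i)

lemma antitone_sortDesc (v : Fin n → ℝ) : Antitone (sortDesc v) :=
  fun _ _ hij => neg_le_neg_iff.mp (Tuple.monotone_sort (fun i => -v i) hij)

lemma sum_comp_sortDesc (f : ℝ → ℝ) (v : Fin n → ℝ) :
    ∑ i, f (sortDesc v i) = ∑ i, f (v i) :=
  Equiv.sum_comp _ (f ∘ v)

lemma le_sortDesc_zero [NeZero n] (v : Fin n → ℝ) (i : Fin n) : v i ≤ sortDesc v 0 := by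
  obtain ⟨j, rfl⟩ := (Tuple.sort fun i => -v i).surjective i
  exact antitone_sortDesc v (Fin.zero_le j)

lemma le_sortDesc_iff {v : Fin n → ℝ} {a : ℝ} {i : Fin n} :
    a ≤ sortDesc v i ↔ i < #{j | a ≤ v j} := by
  rw [← Tuple.lt_card_ge_iff_apply_ge_of_antitone (antitone_sortDesc v)]
  congr! 1
  exact card_equiv (Tuple.sort fun i => -v i) fun j => by
    simp only [mem_filter, mem_univ, true_and]; rfl

lemma sortDesc_le_sortDesc {v w : Fin n → ℝ} (h : ∀ a, #{j | a ≤ v j} ≤ #{j | a ≤ w j})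
    (i : Fin n) : sortDesc v i ≤ sortDesc w i :=
  le_sortDesc_iff.mpr ((le_sortDesc_iff.mp le_rfl).trans_le (h _))

lemma card_filter_le_eq_of_map_eq {ι : Type*} [Fintype ι] {v w : ι → ℝ}
    (h : univ.val.map v = univ.val.map w) (a : ℝ) : #{j | a ≤ v j} = #{j | a ≤ w j} := by
  simpa [Multiset.countP_map, card_def, filter_val] using congrArg (Multiset.countP (a ≤ ·)) h

end SortDesc

lemma Matrix.IsHermitian.dotProduct_mulVec_le {ι : Type*} [Fintype ι] [DecidableEq ι]
    {B : Matrix ι ι ℝ} (hB : B.IsHermitian) {b : ℝ} (hb : ∀ i, hB.eigenvalues i ≤ b)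
    (x : ι → ℝ) : x ⬝ᵥ B *ᵥ x ≤ b * (x ⬝ᵥ x) := by
  set U : Matrix ι ι ℝ := ↑hB.eigenvectorUnitary
  set y := star U *ᵥ x
  have hUt : star U = Uᵀ := conjTranspose_eq_transpose_of_trivial U
  have hxy : x ⬝ᵥ B *ᵥ x = ∑ i, hB.eigenvalues i * y i ^ 2 := by
    conv_lhs => rw [hB.spectral_theorem, Unitary.conjStarAlgAut_apply]
    rw [← mulVec_mulVec, ← mulVec_mulVec, dotProduct_mulVec, ← mulVec_transpose, ← hUt]
    simp only [dotProduct, mulVec_diagonal, Function.comp_apply, RCLike.ofReal_real_eq_id, id]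
    exact sum_congr rfl fun i _ => by ring
  have hyy : y ⬝ᵥ y = x ⬝ᵥ x := by
    rw [dotProduct_mulVec, hUt, vecMul_transpose, mulVec_mulVec,
      mem_unitaryGroup_iff.mp hB.eigenvectorUnitary.2, one_mulVec]
  calc x ⬝ᵥ B *ᵥ x = ∑ i, hB.eigenvalues i * y i ^ 2 := hxy
    _ ≤ ∑ i, b * y i ^ 2 := by gcongr with i; exact hb i
    _ = b * (x ⬝ᵥ x) := by rw [← hyy, dotProduct, mul_sum]; simp only [sq]

lemma svalR_sq {m n : ℕ} (A : Matrix (Fin m) (Fin n) ℝ) (i : Fin m) :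
    svalR A i ^ 2 = (isHermitian_mul_conjTranspose_self A).eigenvalues i :=
  Real.sq_sqrt (eigenvalues_self_mul_conjTranspose_nonneg A i)

lemma sum_sq_svalR {m n : ℕ} (A : Matrix (Fin m) (Fin n) ℝ) :
    ∑ i, svalR A i ^ 2 = ∑ i, ∑ j, A i j ^ 2 := by
  have h := (isHermitian_mul_conjTranspose_self A).trace_eq_sum_eigenvalues
  simp only [RCLike.ofReal_real_eq_id, id] at h
  simp only [svalR_sq, ← h]
  simp only [trace, diag_apply, mul_apply, conjTranspose_apply, star_trivial, sq]

lemma Matrix.IsHermitian.map_svalR_eq {n : ℕ} {A : Matrix (Fin n) (Fin n) ℝ}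
    (hA : A.IsHermitian) :
    univ.val.map (svalR A) = univ.val.map fun i => |hA.eigenvalues i| := by
  have hAA : (A * Aᴴ).charpoly = (cfc (· ^ 2 : ℝ → ℝ) A).charpoly := by
    rw [cfc_pow_id A 2 hA.isSelfAdjoint, hA.eq, sq]
  have hroots := congrArg Polynomial.roots hAA
  rw [(isHermitian_mul_conjTranspose_self A).roots_charpoly_eq_eigenvalues,
    hA.charpoly_cfc_eq,
    Polynomial.roots_prod _ _ (prod_ne_zero_iff.mpr fun i _ => Polynomial.X_sub_C_ne_zero _)]
    at hroots
  simp only [RCLike.ofReal_real_eq_id, Function.id_comp, id, Polynomial.roots_X_sub_C,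
    Multiset.bind_singleton] at hroots
  calc univ.val.map (svalR A)
      = (univ.val.map (isHermitian_mul_conjTranspose_self A).eigenvalues).map Real.sqrt :=
        (Multiset.map_map _ _ _).symm
    _ = univ.val.map fun i => |hA.eigenvalues i| := by
      rw [hroots, Multiset.map_map]
      simp only [Function.comp_def, Real.sqrt_sq_eq_abs]

lemma Matrix.IsHermitian.sortDesc_eigenvalues_le_svalRSorted {n : ℕ}
    {A : Matrix (Fin n) (Fin n) ℝ} (hA : A.IsHermitian) (i : Fin n) :
    sortDesc hA.eigenvalues i ≤ svalRSorted A i := by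
  refine sortDesc_le_sortDesc (fun a => ?_) i
  rw [card_filter_le_eq_of_map_eq hA.map_svalR_eq]
  exact card_le_card (monotone_filter_right _ fun j _ h => h.trans (le_abs_self _))

lemma svalRSorted_eq_sortDesc {m n : ℕ} (A : Matrix (Fin m) (Fin n) ℝ) :
    svalRSorted A = sortDesc (svalR A) := rfl

lemma sum_entries_le_svalRSorted_zero_mul {m n : ℕ} [NeZero m] (A : Matrix (Fin m) (Fin n) ℝ) :
    ∑ i, ∑ j, A i j ≤ svalRSorted A 0 * √(m * n) := by
  set σ := svalRSorted A 0
  set c : Fin n → ℝ := (fun _ => 1) ᵥ* A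
  have hσ : 0 ≤ σ := Real.sqrt_nonneg _
  have hc : c ⬝ᵥ c ≤ σ ^ 2 * m := by
    have hγ (i : Fin m) : (isHermitian_mul_conjTranspose_self A).eigenvalues i ≤ σ ^ 2 := by
      rw [← svalR_sq]
      exact pow_le_pow_left₀ (Real.sqrt_nonneg _) (le_sortDesc_zero (svalR A) i) 2
    convert (isHermitian_mul_conjTranspose_self A).dotProduct_mulVec_le hγ (fun _ => 1) using 1
    · rw [← mulVec_mulVec, dotProduct_mulVec, conjTranspose_eq_transpose_of_trivial,
        mulVec_transpose]
    · simp [dotProduct]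
  have hsum : ∑ i, ∑ j, A i j = ∑ j, c j := by
    simp only [c, vecMul, dotProduct, one_mul]
    exact sum_comm
  refine hsum ▸ (le_abs_self _).trans (abs_le_of_sq_le_sq ?_ (by positivity))
  calc (∑ j, c j) ^ 2 ≤ n * (c ⬝ᵥ c) := by
        simpa [dotProduct, sq] using sq_sum_le_card_mul_sum_sq (s := univ) (f := c)
    _ ≤ n * (σ ^ 2 * m) := by gcongr
    _ = (σ * √(m * n)) ^ 2 := by
        rw [mul_pow, Real.sq_sqrt (by positivity)]; ring

lemma sum_ite_lt_le_add_sqrt {n k : ℕ} [NeZero n] (hk : 1 ≤ k) (s : Fin n → ℝ) :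
    ∑ i : Fin n, (if (i : ℕ) < k then s i else 0) ≤
      s 0 + √((k - 1) * (∑ i, s i ^ 2 - s 0 ^ 2)) := by
  rw [← sum_filter]
  set E := ({i | (i : ℕ) < k} : Finset (Fin n)).erase 0
  have h0 : (0 : Fin n) ∈ ({i | (i : ℕ) < k} : Finset (Fin n)) := by simp; omega
  have hE : (#E : ℝ) ≤ k - 1 := by
    have : #E ≤ k - 1 := by
      rw [card_erase_of_mem h0, Fin.card_filter_val_lt]; omega
    rw [← Nat.cast_one, ← Nat.cast_sub hk]
    exact_mod_cast this
  have hQ : ∑ i ∈ E, s i ^ 2 ≤ ∑ i, s i ^ 2 - s 0 ^ 2 := by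
    rw [← sum_erase_eq_sub (mem_univ 0)]
    exact sum_le_sum_of_subset_of_nonneg (erase_subset_erase _ (subset_univ _))
      fun i _ _ => sq_nonneg (s i)
  rw [← add_sum_erase _ s h0]
  gcongr
  refine (le_abs_self _).trans (Real.abs_le_sqrt ?_)
  calc (∑ i ∈ E, s i) ^ 2 ≤ #E * ∑ i ∈ E, s i ^ 2 := sq_sum_le_card_mul_sum_sq
    _ ≤ (k - 1) * (∑ i, s i ^ 2 - s 0 ^ 2) := by
      gcongr
      linarith [(Nat.one_le_cast (α := ℝ)).mpr hk]

lemma add_sqrt_le_of_sq_le {q s S N : ℝ} (hq : 1 ≤ q) (hN : 0 ≤ N)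
    (hsS : s ^ 2 ≤ S) (hSN : S ≤ s * N) :
    s + √((q ^ 2 - 1) * (S - s ^ 2)) ≤ (1 + q) * N / 2 := by
  have hsN : s ≤ N := by nlinarith
  rw [← le_sub_iff_add_le', Real.sqrt_le_iff]
  refine ⟨by nlinarith, ?_⟩
  -- the gap is the perfect square `((1 + q) N / 2 - q s) ^ 2`
  calc (q ^ 2 - 1) * (S - s ^ 2) ≤ (q ^ 2 - 1) * (s * N - s ^ 2) := by gcongr; nlinarith
    _ ≤ ((1 + q) * N / 2 - s) ^ 2 := by nlinarith [sq_nonneg ((1 + q) * N / 2 - q * s)]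

theorem kyFanR_le_of_zero_one {m n k : ℕ} (hk : 1 ≤ k) (A : Matrix (Fin m) (Fin n) ℝ)
    (h01 : ∀ i j, A i j = 0 ∨ A i j = 1) : kyFanR A k ≤ (1 + √k) * √(m * n) / 2 := by
  obtain _ | m := m
  · simp [kyFanR]
  have hS : ∑ i, svalRSorted A i ^ 2 = ∑ i, ∑ j, A i j := by
    rw [svalRSorted_eq_sortDesc, sum_comp_sortDesc (· ^ 2), sum_sq_svalR]
    refine sum_congr rfl fun i _ => sum_congr rfl fun j _ => ?_
    rcases h01 i j with h | h <;> simp [h]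
  have hk' : (k : ℝ) - 1 = √k ^ 2 - 1 := by rw [Real.sq_sqrt (Nat.cast_nonneg k)]
  refine (sum_ite_lt_le_add_sqrt hk (svalRSorted A)).trans ?_
  rw [hk']
  exact add_sqrt_le_of_sq_le (Real.one_le_sqrt.mpr (by exact_mod_cast hk))
    (Real.sqrt_nonneg _) (single_le_sum (fun i _ => sq_nonneg (svalRSorted A i)) (mem_univ 0))
    (hS ▸ sum_entries_le_svalRSorted_zero_mul A)

theorem eig_sum_le_kyFan_general {n k : ℕ} (hk1 : 1 ≤ k)
    (G : SimpleGraph (Fin n)) [DecidableRel G.Adj] :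
    (∑ i : Fin n, if (i : ℕ) < k then geigSorted G i else 0) ≤ kyFanG G k ∧
      kyFanG G k ≤ (1 + Real.sqrt k) * n / 2 := by
  constructor
  · refine sum_le_sum fun i _ => ?_
    split_ifs
    exacts [(adjHerm G).sortDesc_eigenvalues_le_svalRSorted i, le_rfl]
  · have h01 (i j : Fin n) : G.adjMatrix ℝ i j = 0 ∨ G.adjMatrix ℝ i j = 1 := by
      by_cases h : G.Adj i j <;> simp [h]
    have := kyFanR_le_of_zero_one hk1 _ h01
    rwa [Real.sqrt_mul_self (Nat.cast_nonneg n)] at this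

/-- The sum of the `k` largest eigenvalues of a graph is at most `‖G‖_{F_k} ≤ (1 + √k)n/2`. -/
theorem eig_sum_le_kyFan {n k : ℕ} (hk1 : 1 ≤ k) (hkn : k ≤ n)
    (G : SimpleGraph (Fin n)) [DecidableRel G.Adj] :
    (∑ i : Fin n, if (i : ℕ) < k then geigSorted G i else 0) ≤ kyFanG G k ∧
      kyFanG G k ≤ (1 + Real.sqrt k) * n / 2 :=
  eig_sum_le_kyFan_general hk1 G
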